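/- arXiv:2311.18283 — 4 statements merged into one kernel-verified Lean document; each statement's English description precedes it below -/
import Mathlib

section
/- Let 0 < α < 1, λ > 0, κ > 0, γ > 0 and M > 0. Let f : [0,∞) → [0,∞) be bounded and measurable, and let H : ℝ → ℝ be increasing and locally Lipschitz with H(x) = 0 for all x ≤ 0. Then there is at most one continuous function r : [0,M] → ℝ satisfying the impact Volterra equation r(t) = H(κ ∫₀ᵗ λ⁻¹ (t−s)^{−α} (γ f(s) − r(s)) ds) for all t ∈ [0,M]; that is, if r₁ and r₂ are two continuous solutions on [0,M], then r₁(t) = r₂(t) for all t ∈ [0,M]. -/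
/-!
The difference `g = |r₁ - r₂|` of two solutions satisfies `g t ≤ L ∫₀ᵗ (t - s)^(-α) g s ds`, where
`L` is `|κ / λ|` times a Lipschitz constant of `H` on a compact interval containing every argument
of `H` in the equation; these arguments are bounded because `γ f - rᵢ` is bounded and the kernel
is integrable. Such a `g` vanishes: if `g = 0` on `[0, a]` and `D` is the maximum of `g` on
`[0, a + δ]`, then `D ≤ L δ^(1-α) / (1-α) · D`, so `D = 0` once `δ` is small, and `[0, M]` is
covered by finitely many steps of length `δ`.
-/

open MeasureTheory Set Filter Topology
open scoped NNReal

section RpowKernel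

variable {α : ℝ}

lemma intervalIntegrable_sub_rpow_neg (hα : α < 1) (t a b : ℝ) :
    IntervalIntegrable (fun s => (t - s) ^ (-α)) volume a b := by
  simpa using (intervalIntegral.intervalIntegrable_rpow' (a := t - a) (b := t - b)
    (r := -α) (by linarith)).comp_sub_left t

lemma integral_sub_rpow_neg (hα : α < 1) (a t : ℝ) :
    ∫ s in a..t, (t - s) ^ (-α) = (t - a) ^ (1 - α) / (1 - α) := by
  rw [intervalIntegral.integral_comp_sub_left (fun x => x ^ (-α)) t, sub_self,
    integral_rpow (Or.inl (by linarith)), Real.zero_rpow (by linarith)]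
  ring_nf

lemma intervalIntegrable_sub_rpow_neg_mul (hα : α < 1) {ρ : ℝ → ℝ} {a t C : ℝ} (hat : a ≤ t)
    (hρ : AEStronglyMeasurable ρ (volume.restrict (Ioc a t)))
    (hbd : ∀ s ∈ Ioc a t, |ρ s| ≤ C) :
    IntervalIntegrable (fun s => (t - s) ^ (-α) * ρ s) volume a t := by
  rw [intervalIntegrable_iff_integrableOn_Ioc_of_le hat]
  refine ((intervalIntegrable_iff_integrableOn_Ioc_of_le hat).1
    (intervalIntegrable_sub_rpow_neg hα t a t)).mul_bdd (c := C) hρ ?_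
  filter_upwards [ae_restrict_mem measurableSet_Ioc] with s hs using hbd s hs

lemma abs_integral_sub_rpow_neg_mul_le (hα : α < 1) {ρ : ℝ → ℝ} {a t C : ℝ} (hat : a ≤ t)
    (hbd : ∀ s ∈ Ioc a t, |ρ s| ≤ C) :
    |∫ s in a..t, (t - s) ^ (-α) * ρ s| ≤ C * ((t - a) ^ (1 - α) / (1 - α)) := by
  rw [← integral_sub_rpow_neg hα, ← intervalIntegral.integral_const_mul, ← Real.norm_eq_abs]
  refine intervalIntegral.norm_integral_le_of_norm_le hat (ae_of_all _ fun s hs => ?_)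
    ((intervalIntegrable_sub_rpow_neg hα t a t).const_mul C)
  have hk : 0 ≤ (t - s) ^ (-α) := Real.rpow_nonneg (by linarith [hs.2]) _
  rw [Real.norm_eq_abs, abs_mul, abs_of_nonneg hk, mul_comm]
  exact mul_le_mul_of_nonneg_right (hbd s hs) hk

lemma abs_integral_sub_rpow_neg_mul_le_integral {ρ : ℝ → ℝ} {a t : ℝ} (hat : a ≤ t) :
    |∫ s in a..t, (t - s) ^ (-α) * ρ s| ≤ ∫ s in a..t, (t - s) ^ (-α) * |ρ s| := by
  refine (intervalIntegral.abs_integral_le_integral_abs hat).trans_eq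
    (intervalIntegral.integral_congr fun s hs => ?_)
  rw [uIcc_of_le hat] at hs
  simp only [abs_mul, abs_of_nonneg (Real.rpow_nonneg (sub_nonneg.2 hs.2) _)]

lemma abs_sub_le_of_lipschitzOnWith_integral_sub_rpow_neg {H ρ₁ ρ₂ : ℝ → ℝ} {K : ℝ≥0}
    {S : Set ℝ} (hH : LipschitzOnWith K H S) {c t : ℝ} (ht : 0 ≤ t)
    (hρ₁ : IntervalIntegrable (fun s => (t - s) ^ (-α) * ρ₁ s) volume 0 t)
    (hρ₂ : IntervalIntegrable (fun s => (t - s) ^ (-α) * ρ₂ s) volume 0 t)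
    (hS₁ : c * ∫ s in 0..t, (t - s) ^ (-α) * ρ₁ s ∈ S)
    (hS₂ : c * ∫ s in 0..t, (t - s) ^ (-α) * ρ₂ s ∈ S) :
    |H (c * ∫ s in 0..t, (t - s) ^ (-α) * ρ₁ s) - H (c * ∫ s in 0..t, (t - s) ^ (-α) * ρ₂ s)|
      ≤ K * |c| * ∫ s in 0..t, (t - s) ^ (-α) * |ρ₁ s - ρ₂ s| := by
  have hdiff : (c * ∫ s in 0..t, (t - s) ^ (-α) * ρ₁ s) - c * ∫ s in 0..t, (t - s) ^ (-α) * ρ₂ s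
      = c * ∫ s in 0..t, (t - s) ^ (-α) * (ρ₁ s - ρ₂ s) := by
    rw [← mul_sub, ← intervalIntegral.integral_sub hρ₁ hρ₂]
    simp only [mul_sub]
  rw [← Real.dist_eq]
  refine (hH.dist_le_mul _ hS₁ _ hS₂).trans ?_
  rw [Real.dist_eq, hdiff, abs_mul, mul_assoc]
  gcongr
  exact abs_integral_sub_rpow_neg_mul_le_integral ht

end RpowKernel

section Gronwall

variable {α L : ℝ} {g : ℝ → ℝ}

lemma eqOn_zero_of_le_integral_sub_rpow_neg_of_eqOn_zero (hα : α < 1) (hL : 0 ≤ L)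
    {a b δ : ℝ} (hg : ContinuousOn g (Icc 0 b)) (hg0 : ∀ t ∈ Icc 0 b, 0 ≤ g t)
    (h : ∀ t ∈ Icc 0 b, g t ≤ L * ∫ s in 0..t, (t - s) ^ (-α) * g s)
    (ha : 0 ≤ a) (hab : a ≤ b) (hba : b ≤ a + δ) (hδ : L * δ ^ (1 - α) < 1 - α)
    (hzero : EqOn g 0 (Icc 0 a)) : EqOn g 0 (Icc 0 b) := by
  obtain ⟨u, hu, hmax⟩ := isCompact_Icc.exists_isMaxOn (nonempty_Icc.2 (ha.trans hab)) hg
  have hgu0 : 0 ≤ g u := hg0 u hu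
  suffices hgu : g u = 0 from fun t ht => le_antisymm (hgu ▸ hmax ht : g t ≤ 0) (hg0 t ht)
  rcases le_or_gt u a with hua | hau
  · exact hzero ⟨hu.1, hua⟩
  have hint : IntervalIntegrable (fun s => (u - s) ^ (-α) * g s) volume 0 u :=
    (intervalIntegrable_sub_rpow_neg hα u 0 u).mul_continuousOn
      (hg.mono (by rw [uIcc_of_le hu.1]; exact Icc_subset_Icc le_rfl hu.2))
  have hsplit : ∫ s in 0..u, (u - s) ^ (-α) * g s = ∫ s in a..u, (u - s) ^ (-α) * g s := by
    rw [← intervalIntegral.integral_add_adjacent_intervals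
      (hint.mono_set (by rw [uIcc_of_le ha, uIcc_of_le hu.1]; exact Icc_subset_Icc le_rfl hau.le))
      (hint.mono_set (by rw [uIcc_of_le hau.le, uIcc_of_le hu.1]; exact Icc_subset_Icc ha le_rfl)),
      intervalIntegral.integral_congr (g := fun _ => 0) fun s hs => ?_]
    · simp
    · rw [uIcc_of_le ha] at hs
      simp [hzero hs]
  have hbound : ∫ s in a..u, (u - s) ^ (-α) * g s ≤ g u * ((u - a) ^ (1 - α) / (1 - α)) :=
    (le_abs_self _).trans <| abs_integral_sub_rpow_neg_mul_le hα hau.le fun s hs => by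
      have hs' : s ∈ Icc 0 b := ⟨ha.trans hs.1.le, hs.2.trans hu.2⟩
      rw [abs_of_nonneg (hg0 s hs')]
      exact hmax hs'
  have hpow : (u - a) ^ (1 - α) ≤ δ ^ (1 - α) :=
    Real.rpow_le_rpow (by linarith) (by linarith [hu.2]) (by linarith)
  have hgu : g u ≤ L * δ ^ (1 - α) / (1 - α) * g u := calc
    g u ≤ L * ∫ s in a..u, (u - s) ^ (-α) * g s := hsplit ▸ h u hu
    _ ≤ L * (g u * ((u - a) ^ (1 - α) / (1 - α))) := mul_le_mul_of_nonneg_left hbound hL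
    _ ≤ L * (g u * (δ ^ (1 - α) / (1 - α))) := by gcongr
    _ = L * δ ^ (1 - α) / (1 - α) * g u := by ring
  have hsmall : L * δ ^ (1 - α) / (1 - α) < 1 := (div_lt_one (by linarith)).2 hδ
  nlinarith

theorem eqOn_zero_of_le_integral_sub_rpow_neg (hα : α < 1) (hL : 0 ≤ L) {M : ℝ}
    (hg : ContinuousOn g (Icc 0 M)) (hg0 : ∀ t ∈ Icc 0 M, 0 ≤ g t)
    (h : ∀ t ∈ Icc 0 M, g t ≤ L * ∫ s in 0..t, (t - s) ^ (-α) * g s) :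
    EqOn g 0 (Icc 0 M) := by
  intro t ht
  have hM : 0 ≤ M := ht.1.trans ht.2
  have h1α : 0 < 1 - α := by linarith
  have hlim : Tendsto (fun δ : ℝ => L * δ ^ (1 - α)) (𝓝[>] 0) (𝓝 0) := by
    have := (Real.continuousAt_rpow_const 0 (1 - α) (Or.inr h1α.le)).const_mul L
    rw [ContinuousAt, Real.zero_rpow h1α.ne', mul_zero] at this
    exact this.mono_left nhdsWithin_le_nhds
  obtain ⟨δ, hδ, hδ0⟩ :=
    ((hlim.eventually (gt_mem_nhds h1α)).and self_mem_nhdsWithin).exists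
  have hinduct : ∀ n : ℕ, EqOn g 0 (Icc 0 (min (n * δ) M)) := by
    intro n
    induction n with
    | zero =>
      intro t ht
      obtain rfl : t = 0 := le_antisymm (by simpa using ht.2.trans (min_le_left _ _)) ht.1
      have h0 := h 0 ⟨le_rfl, hM⟩
      rw [intervalIntegral.integral_same, mul_zero] at h0
      exact le_antisymm h0 (hg0 0 ⟨le_rfl, hM⟩)
    | succ n ih =>
      have hsub : Icc 0 (min ((n + 1 : ℕ) * δ) M) ⊆ Icc 0 M :=
        Icc_subset_Icc le_rfl (min_le_right _ _)
      refine eqOn_zero_of_le_integral_sub_rpow_neg_of_eqOn_zero hα hL (hg.mono hsub)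
        (fun t ht => hg0 t (hsub ht)) (fun t ht => h t (hsub ht))
        (le_min (by positivity) hM) ?_ ?_ hδ ih
      · push_cast; gcongr; linarith
      · push_cast
        have := min_le_left (((n : ℝ) + 1) * δ) M
        have := min_le_right (((n : ℝ) + 1) * δ) M
        rcases min_cases ((n : ℝ) * δ) M with hmin | hmin <;>
        · rw [hmin.1]; linarith
  obtain ⟨n, hn⟩ := exists_nat_ge (M / δ)
  exact hinduct n ⟨ht.1, le_min (ht.2.trans ((div_le_iff₀ hδ0).1 hn)) ht.2⟩

end Gronwall

theorem volterra_rpow_solution_unique {α M c : ℝ} (hα : α < 1) {φ H r₁ r₂ : ℝ → ℝ}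
    (hφ : AEStronglyMeasurable φ (volume.restrict (Icc 0 M)))
    (hφ_bdd : ∃ C, ∀ s ∈ Icc 0 M, |φ s| ≤ C) (hH : LocallyLipschitz H)
    (hr₁_cont : ContinuousOn r₁ (Icc 0 M)) (hr₂_cont : ContinuousOn r₂ (Icc 0 M))
    (hr₁ : ∀ t ∈ Icc 0 M, r₁ t = H (c * ∫ s in 0..t, (t - s) ^ (-α) * (φ s - r₁ s)))
    (hr₂ : ∀ t ∈ Icc 0 M, r₂ t = H (c * ∫ s in 0..t, (t - s) ^ (-α) * (φ s - r₂ s))) :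
    EqOn r₁ r₂ (Icc 0 M) := by
  obtain ⟨C, hC⟩ := hφ_bdd
  obtain ⟨B₁, hB₁⟩ := isCompact_Icc.exists_bound_of_continuousOn hr₁_cont
  obtain ⟨B₂, hB₂⟩ := isCompact_Icc.exists_bound_of_continuousOn hr₂_cont
  set B := C + max B₁ B₂
  have hρ₁ : ∀ s ∈ Icc 0 M, |φ s - r₁ s| ≤ B := fun s hs =>
    (abs_sub _ _).trans (add_le_add (hC s hs) ((hB₁ s hs).trans (le_max_left _ _)))
  have hρ₂ : ∀ s ∈ Icc 0 M, |φ s - r₂ s| ≤ B := fun s hs =>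
    (abs_sub _ _).trans (add_le_add (hC s hs) ((hB₂ s hs).trans (le_max_right _ _)))
  set R := |c| * (B * (M ^ (1 - α) / (1 - α)))
  have harg : ∀ r : ℝ → ℝ, (∀ s ∈ Icc 0 M, |φ s - r s| ≤ B) → ∀ t ∈ Icc 0 M,
      c * ∫ s in 0..t, (t - s) ^ (-α) * (φ s - r s) ∈ Icc (-R) R := by
    intro r hρ t ht
    have hB : 0 ≤ B := (abs_nonneg _).trans (hρ t ht)
    rw [mem_Icc, ← abs_le, abs_mul]
    refine mul_le_mul_of_nonneg_left ((abs_integral_sub_rpow_neg_mul_le hα ht.1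
      fun s hs => hρ s ⟨hs.1.le, hs.2.trans ht.2⟩).trans ?_) (abs_nonneg c)
    rw [sub_zero]
    have : 0 < 1 - α := by linarith
    gcongr
    exacts [ht.1, ht.2]
  have hint : ∀ r : ℝ → ℝ, ContinuousOn r (Icc 0 M) → (∀ s ∈ Icc 0 M, |φ s - r s| ≤ B) →
      ∀ t ∈ Icc 0 M, IntervalIntegrable (fun s => (t - s) ^ (-α) * (φ s - r s)) volume 0 t :=
    fun r hr hρ t ht => intervalIntegrable_sub_rpow_neg_mul hα ht.1
      ((hφ.sub (hr.aestronglyMeasurable measurableSet_Icc)).mono_measure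
        (Measure.restrict_mono (Ioc_subset_Icc_self.trans (Icc_subset_Icc le_rfl ht.2)) le_rfl))
      fun s hs => hρ s ⟨hs.1.le, hs.2.trans ht.2⟩
  obtain ⟨K, hK⟩ := hH.locallyLipschitzOn.exists_lipschitzOnWith_of_compact
    (isCompact_Icc (a := -R) (b := R))
  have key : ∀ t ∈ Icc 0 M,
      |r₁ t - r₂ t| ≤ K * |c| * ∫ s in 0..t, (t - s) ^ (-α) * |r₁ s - r₂ s| := by
    intro t ht
    rw [hr₁ t ht, hr₂ t ht]
    refine (abs_sub_le_of_lipschitzOnWith_integral_sub_rpow_neg hK ht.1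
      (hint r₁ hr₁_cont hρ₁ t ht) (hint r₂ hr₂_cont hρ₂ t ht)
      (harg r₁ hρ₁ t ht) (harg r₂ hρ₂ t ht)).trans_eq ?_
    congr 1
    exact intervalIntegral.integral_congr fun s _ => by
      rw [sub_sub_sub_cancel_left, abs_sub_comm]
  intro t ht
  simpa [sub_eq_zero] using eqOn_zero_of_le_integral_sub_rpow_neg hα (by positivity)
    (hr₁_cont.sub hr₂_cont).abs (fun s _ => abs_nonneg _) key ht

theorem stmt_0_general
    (α lam κ γ M : ℝ) (hα1 : α < 1)
    (f : ℝ → ℝ) (hf_meas : Measurable f)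
    (hf_nonneg : ∀ t, 0 ≤ t → 0 ≤ f t)
    (hf_bdd : ∃ C, ∀ t, 0 ≤ t → f t ≤ C)
    (H : ℝ → ℝ) (hH_lip : LocallyLipschitz H)
    (r₁ r₂ : ℝ → ℝ)
    (hr₁_cont : ContinuousOn r₁ (Icc 0 M))
    (hr₂_cont : ContinuousOn r₂ (Icc 0 M))
    (hr₁ : ∀ t ∈ Icc (0:ℝ) M,
      r₁ t = H (κ * ∫ s in (0:ℝ)..t, lam⁻¹ * (t - s) ^ (-α) * (γ * f s - r₁ s)))
    (hr₂ : ∀ t ∈ Icc (0:ℝ) M,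
      r₂ t = H (κ * ∫ s in (0:ℝ)..t, lam⁻¹ * (t - s) ^ (-α) * (γ * f s - r₂ s))) :
    ∀ t ∈ Icc (0:ℝ) M, r₁ t = r₂ t := by
  obtain ⟨C, hC⟩ := hf_bdd
  have hpull : ∀ (r : ℝ → ℝ) (t : ℝ),
      κ * ∫ s in (0:ℝ)..t, lam⁻¹ * (t - s) ^ (-α) * (γ * f s - r s) =
      κ * lam⁻¹ * ∫ s in (0:ℝ)..t, (t - s) ^ (-α) * (γ * f s - r s) := by
    intro r t
    simp only [mul_assoc, intervalIntegral.integral_const_mul]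
  have hγf_bdd : ∀ s ∈ Icc 0 M, |γ * f s| ≤ |γ| * C := fun s hs => by
    rw [abs_mul, abs_of_nonneg (hf_nonneg s hs.1)]
    exact mul_le_mul_of_nonneg_left (hC s hs.1) (abs_nonneg γ)
  exact volterra_rpow_solution_unique hα1 (hf_meas.const_mul γ).aestronglyMeasurable
    ⟨_, hγf_bdd⟩ hH_lip hr₁_cont hr₂_cont (fun t ht => (hr₁ t ht).trans (by rw [hpull]))
    (fun t ht => (hr₂ t ht).trans (by rw [hpull]))

/-- Uniqueness of continuous solutions of the impact Volterra equation
`r(t) = H(κ ∫₀ᵗ λ⁻¹ (t−s)^(−α) (γ f(s) − r(s)) ds)` on `[0, M]`. -/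
theorem stmt_0
    (α lam κ γ M : ℝ) (hα0 : 0 < α) (hα1 : α < 1) (hlam : 0 < lam)
    (hκ : 0 < κ) (hγ : 0 < γ) (hM : 0 < M)
    (f : ℝ → ℝ) (hf_meas : Measurable f)
    (hf_nonneg : ∀ t, 0 ≤ t → 0 ≤ f t)
    (hf_bdd : ∃ C, ∀ t, 0 ≤ t → f t ≤ C)
    (H : ℝ → ℝ) (hH_mono : Monotone H) (hH_lip : LocallyLipschitz H)
    (hH_zero : ∀ x, x ≤ 0 → H x = 0)
    (r₁ r₂ : ℝ → ℝ)
    (hr₁_cont : ContinuousOn r₁ (Icc 0 M))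
    (hr₂_cont : ContinuousOn r₂ (Icc 0 M))
    (hr₁ : ∀ t ∈ Icc (0:ℝ) M,
      r₁ t = H (κ * ∫ s in (0:ℝ)..t, lam⁻¹ * (t - s) ^ (-α) * (γ * f s - r₁ s)))
    (hr₂ : ∀ t ∈ Icc (0:ℝ) M,
      r₂ t = H (κ * ∫ s in (0:ℝ)..t, lam⁻¹ * (t - s) ^ (-α) * (γ * f s - r₂ s))) :
    ∀ t ∈ Icc (0:ℝ) M, r₁ t = r₂ t :=
  stmt_0_general α lam κ γ M hα1 f hf_meas hf_nonneg hf_bdd H hH_lip r₁ r₂ hr₁_cont hr₂_cont hr₁ hr₂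
end

section
/- Let M > 0, let ζ : [0,∞) → [0,∞) be antitone (nonincreasing) and locally integrable, and let f : [0,M] → ℝ be bounded and measurable with sup norm ‖f‖∞. Then for all t ≥ 0 and h > 0 with t + h ≤ M, one has | ∫₀ᵗ ζ(t−s) f(s) ds − ∫₀^{t+h} ζ(t+h−s) f(s) ds | ≤ 2 ‖f‖∞ ∫₀^h ζ(s) ds. -/
/-!
Split `∫₀^{t+h}` at `t`. On `[0, t]` the two kernels differ by `ζ(t-s) - ζ(t+h-s) ≥ 0`, whose
integral is `∫₀ʰ ζ - ∫ₜ^{t+h} ζ ≤ ∫₀ʰ ζ` after the substitution `u = t - s`; on `[t, t+h]` only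
`ζ(t+h-s)` remains, whose integral is `∫₀ʰ ζ`. Bounding `|f|` by `‖f‖∞` on each piece gives the
two halves of `2 ‖f‖∞ ∫₀ʰ ζ`.
-/

open MeasureTheory Set intervalIntegral

section

variable {g f : ℝ → ℝ} {a b C : ℝ}

theorem IntervalIntegrable.mul_of_abs_le (hg : IntervalIntegrable g volume a b) (hab : a ≤ b)
    (hf : Measurable f) (hfC : ∀ s ∈ Icc a b, |f s| ≤ C) :
    IntervalIntegrable (fun s => g s * f s) volume a b := by
  rw [intervalIntegrable_iff_integrableOn_Icc_of_le hab] at hg ⊢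
  exact hg.mul_bdd hf.aestronglyMeasurable
    ((ae_restrict_iff' measurableSet_Icc).2 (.of_forall hfC))

theorem abs_integral_mul_le_of_abs_le (hab : a ≤ b) (hg : IntervalIntegrable g volume a b)
    (hg0 : ∀ s ∈ Icc a b, 0 ≤ g s) (hfC : ∀ s ∈ Icc a b, |f s| ≤ C) :
    |∫ s in a..b, g s * f s| ≤ C * ∫ s in a..b, g s := by
  have hbound : ∀ s ∈ Ioc a b, ‖g s * f s‖ ≤ g s * C := fun s hs => by
    have hs := Ioc_subset_Icc_self hs
    rw [norm_mul, Real.norm_eq_abs, Real.norm_eq_abs, abs_of_nonneg (hg0 s hs)]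
    exact mul_le_mul_of_nonneg_left (hfC s hs) (hg0 s hs)
  have := norm_integral_le_of_norm_le hab (.of_forall hbound) (hg.mul_const C)
  rwa [Real.norm_eq_abs, intervalIntegral.integral_mul_const, mul_comm] at this

theorem integral_sub_integral_eq_integral_sub_sub {φ ψ : ℝ → ℝ} {c : ℝ}
    (hφ : IntervalIntegrable φ volume a b) (hψ : IntervalIntegrable ψ volume a b)
    (hψ' : IntervalIntegrable ψ volume b c) :
    (∫ x in a..b, φ x) - ∫ x in a..c, ψ x = (∫ x in a..b, (φ x - ψ x)) - ∫ x in b..c, ψ x := by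
  rw [← integral_add_adjacent_intervals hψ hψ', integral_sub hφ hψ]
  ring

end

section

variable {ζ : ℝ → ℝ} {t h : ℝ}

theorem IntervalIntegrable.comp_sub_left_of_le {T c a b : ℝ}
    (hζ : IntervalIntegrable ζ volume 0 T) (ha : c - T ≤ a) (hab : a ≤ b) (hb : b ≤ c) :
    IntervalIntegrable (fun s => ζ (c - s)) volume a b := by
  refine (hζ.comp_sub_left c).mono_set ?_
  rw [sub_zero, uIcc_of_le hab, uIcc_of_ge (by linarith)]
  exact Icc_subset_Icc ha hb

theorem integral_comp_sub_left_sub_comp_sub_left (hζ : IntervalIntegrable ζ volume 0 (t + h))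
    (ht : 0 ≤ t) (hh : 0 ≤ h) :
    ∫ s in (0:ℝ)..t, (ζ (t - s) - ζ (t + h - s)) = (∫ s in (0:ℝ)..h, ζ s) - ∫ s in t..(t + h), ζ s := by
  have hsub : ∀ a b, 0 ≤ a → a ≤ b → b ≤ t + h → IntervalIntegrable ζ volume a b :=
    fun a b ha hab hb => hζ.mono_set (by
      rw [uIcc_of_le hab, uIcc_of_le (by linarith)]; exact Icc_subset_Icc ha hb)
  rw [integral_sub (hζ.comp_sub_left_of_le (by linarith) ht le_rfl)
      (hζ.comp_sub_left_of_le (by linarith) ht (by linarith)),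
    integral_comp_sub_left, integral_comp_sub_left]
  simp only [sub_zero, sub_self, add_sub_cancel_left]
  exact integral_interval_sub_interval_comm (hsub 0 t le_rfl ht (by linarith))
    (hsub h (t + h) hh (by linarith) le_rfl) (hsub 0 h le_rfl hh (by linarith))

end

theorem stmt_5_general
    (M : ℝ)
    (ζ : ℝ → ℝ) (hζ_nonneg : ∀ s, 0 ≤ s → 0 ≤ ζ s)
    (hζ_anti : AntitoneOn ζ (Ici 0))
    (hζ_int : ∀ b, 0 < b → IntegrableOn ζ (Icc 0 b))
    (f : ℝ → ℝ) (hf_meas : Measurable f)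
    (Cf : ℝ) (hCf : ∀ s ∈ Icc (0:ℝ) M, |f s| ≤ Cf)
    (t h : ℝ) (ht : 0 ≤ t) (hh : 0 < h) (hth : t + h ≤ M) :
    |(∫ s in (0:ℝ)..t, ζ (t - s) * f s) - ∫ s in (0:ℝ)..(t + h), ζ (t + h - s) * f s|
      ≤ 2 * Cf * ∫ s in (0:ℝ)..h, ζ s := by
  have hζT : IntervalIntegrable ζ volume 0 (t + h) :=
    (intervalIntegrable_iff_integrableOn_Icc_of_le (by linarith)).2 (hζ_int _ (by linarith))
  have hk₁ := hζT.comp_sub_left_of_le (c := t) (by linarith) ht le_rfl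
  have hk₂ := hζT.comp_sub_left_of_le (c := t + h) (by linarith) ht (by linarith)
  have hk₂' := hζT.comp_sub_left_of_le (c := t + h) (a := t) (by linarith) (by linarith) le_rfl
  have hf₁ : ∀ s ∈ Icc 0 t, |f s| ≤ Cf := fun s hs => hCf s ⟨hs.1, by linarith [hs.2]⟩
  have hf₂ : ∀ s ∈ Icc t (t + h), |f s| ≤ Cf := fun s hs => hCf s ⟨by linarith [hs.1], hs.2.trans hth⟩
  have hgap : ∀ s ∈ Icc 0 t, 0 ≤ ζ (t - s) - ζ (t + h - s) := fun s hs =>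
    sub_nonneg.2 (hζ_anti (mem_Ici.2 (by linarith [hs.2])) (mem_Ici.2 (by linarith [hs.2])) (by linarith))
  have bound₁ : |∫ s in (0:ℝ)..t, (ζ (t - s) * f s - ζ (t + h - s) * f s)|
      ≤ Cf * ((∫ s in (0:ℝ)..h, ζ s) - ∫ s in t..(t + h), ζ s) := by
    simp_rw [← sub_mul]
    rw [← integral_comp_sub_left_sub_comp_sub_left hζT ht hh.le]
    exact abs_integral_mul_le_of_abs_le ht (hk₁.sub hk₂) hgap hf₁
  have bound₂ : |∫ s in t..(t + h), ζ (t + h - s) * f s| ≤ Cf * ∫ s in (0:ℝ)..h, ζ s := by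
    have := abs_integral_mul_le_of_abs_le (by linarith) hk₂'
      (fun s hs => hζ_nonneg _ (by linarith [hs.2])) hf₂
    rwa [integral_comp_sub_left, sub_self, add_sub_cancel_left] at this
  have hCf0 : 0 ≤ Cf := (abs_nonneg _).trans (hCf t ⟨ht, by linarith⟩)
  have htail : 0 ≤ ∫ s in t..(t + h), ζ s :=
    integral_nonneg (by linarith) fun u hu => hζ_nonneg u (by linarith [hu.1])
  rw [integral_sub_integral_eq_integral_sub_sub (hk₁.mul_of_abs_le ht hf_meas hf₁)
    (hk₂.mul_of_abs_le ht hf_meas hf₁) (hk₂'.mul_of_abs_le (by linarith) hf_meas hf₂)]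
  calc _ ≤ _ := abs_sub _ _
    _ ≤ _ := add_le_add bound₁ bound₂
    _ ≤ 2 * Cf * ∫ s in (0:ℝ)..h, ζ s := by nlinarith [mul_nonneg hCf0 htail]

/-- Uniform equicontinuity modulus for convolutions against a nonincreasing
nonnegative locally integrable kernel `ζ`: the increment between nearby times
is controlled by `2 ‖f‖∞ ∫₀ʰ ζ(s) ds`. -/
theorem stmt_5
    (M : ℝ) (hM : 0 < M)
    (ζ : ℝ → ℝ) (hζ_nonneg : ∀ s, 0 ≤ s → 0 ≤ ζ s)
    (hζ_anti : AntitoneOn ζ (Ici 0))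
    (hζ_int : ∀ b, 0 < b → IntegrableOn ζ (Icc 0 b))
    (f : ℝ → ℝ) (hf_meas : Measurable f)
    (Cf : ℝ) (hCf : ∀ s ∈ Icc (0:ℝ) M, |f s| ≤ Cf)
    (t h : ℝ) (ht : 0 ≤ t) (hh : 0 < h) (hth : t + h ≤ M) :
    |(∫ s in (0:ℝ)..t, ζ (t - s) * f s) - ∫ s in (0:ℝ)..(t + h), ζ (t + h - s) * f s|
      ≤ 2 * Cf * ∫ s in (0:ℝ)..h, ζ s :=
  stmt_5_general M ζ hζ_nonneg hζ_anti hζ_int f hf_meas Cf hCf t h ht hh hth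
end

section
/- Let β > 0. Let k : [0,∞) → [0,∞) be locally integrable, let f : [0,β] → ℝ be bounded and measurable, and let g : ℝ → ℝ be locally Lipschitz continuous. Then the nonlinear Volterra equation y(t) = f(t) + ∫₀ᵗ k(t−s) g(y(s)) ds has at most one bounded measurable solution on [0,β]: if y₁ and y₂ are bounded measurable functions on [0,β] both satisfying the equation for all t ∈ [0,β], then y₁(t) = y₂(t) for all t ∈ [0,β]. -/
/-!
The difference `u = |y₁ - y₂|` of two bounded solutions satisfies the linear Volterra inequality
`u t ≤ ∫₀ᵗ K k(t - s) u(s) ds`, where `K` is a Lipschitz constant of `g` on an interval containing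
both solutions. Choose `δ > 0` with `∫₀^δ K k < 1/2`. If `u` vanishes on `[0, a]`, only the memory
over `[a, t]`, of length at most `δ`, contributes for `t ≤ a + δ`, so the supremum `S` of `u` on
`[0, a + δ]` satisfies `S ≤ S / 2`. Hence `u` vanishes on `[0, a + δ]`, and `n` such steps
cover `[0, β]`.
-/

open MeasureTheory Set Filter Topology
open scoped NNReal

theorem exists_pos_forall_intervalIntegral_lt {k : ℝ → ℝ} {β ε : ℝ} (hβ : 0 ≤ β)
    (hk : IntegrableOn k (Icc 0 β)) (hε : 0 < ε) :
    ∃ δ > 0, ∀ x ∈ Icc 0 β, x ≤ δ → ∫ s in 0..x, k s < ε := by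
  have hcont := intervalIntegral.continuousOn_primitive_interval (a := 0) (b := β)
    (by rwa [uIcc_of_le hβ])
  rw [uIcc_of_le hβ] at hcont
  have htendsto : Tendsto (fun x => ∫ s in 0..x, k s) (𝓝[Icc 0 β] 0) (𝓝 0) := by
    have h0 := hcont 0 ⟨le_rfl, hβ⟩
    rwa [ContinuousWithinAt, intervalIntegral.integral_same] at h0
  obtain ⟨δ, hδ, hball⟩ := Metric.mem_nhdsWithin_iff.1 (htendsto.eventually_lt_const hε)
  refine ⟨δ / 2, half_pos hδ, fun x hx hxδ => hball ⟨?_, hx⟩⟩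
  rw [Metric.mem_ball, Real.dist_eq, sub_zero, abs_of_nonneg hx.1]
  linarith

theorem intervalIntegrable_kernel_mul {k h : ℝ → ℝ} {t C : ℝ} (ht : 0 ≤ t)
    (hk : IntegrableOn k (Icc 0 t)) (hh : AEStronglyMeasurable h)
    (hbdd : ∀ s ∈ Icc 0 t, |h s| ≤ C) :
    IntervalIntegrable (fun s => k (t - s) * h s) volume 0 t := by
  have hk' : IntervalIntegrable (fun s => k (t - s)) volume 0 t := by
    simpa using (((intervalIntegrable_iff_integrableOn_Icc_of_le ht).2 hk).comp_sub_left t).symm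
  rw [intervalIntegrable_iff_integrableOn_Ioc_of_le ht] at hk' ⊢
  refine hk'.mul_bdd (c := C) hh.restrict ?_
  filter_upwards [ae_restrict_mem measurableSet_Ioc] with s hs
  exact hbdd s (Ioc_subset_Icc_self hs)

theorem intervalIntegral_kernel_mul_le {k u : ℝ → ℝ} {a r S : ℝ} (ha : 0 ≤ a) (har : a ≤ r)
    (hk_nonneg : ∀ s ∈ Icc 0 (r - a), 0 ≤ k s) (hk : IntervalIntegrable k volume 0 (r - a))
    (hint : IntervalIntegrable (fun s => k (r - s) * u s) volume 0 r)
    (hu_zero : ∀ s ∈ Icc 0 a, u s = 0) (hu_le : ∀ s ∈ Icc a r, u s ≤ S) :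
    ∫ s in 0..r, k (r - s) * u s ≤ S * ∫ s in 0..(r - a), k s := by
  have hint₀ : IntervalIntegrable (fun s => k (r - s) * u s) volume 0 a :=
    hint.mono_set (uIcc_subset_uIcc_left (by rw [uIcc_of_le (ha.trans har)]; exact ⟨ha, har⟩))
  have hint₁ : IntervalIntegrable (fun s => k (r - s) * u s) volume a r :=
    hint.mono_set (uIcc_subset_uIcc_right (by rw [uIcc_of_le (ha.trans har)]; exact ⟨ha, har⟩))
  have hkS : IntervalIntegrable (fun s => k (r - s) * S) volume a r := by
    simpa using (hk.comp_sub_left r).symm.mul_const S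
  have hvanish : ∫ s in 0..a, k (r - s) * u s = 0 := by
    rw [intervalIntegral.integral_congr (g := fun _ => 0), intervalIntegral.integral_zero]
    intro s hs
    rw [uIcc_of_le ha] at hs
    simp [hu_zero s hs]
  calc ∫ s in 0..r, k (r - s) * u s = ∫ s in a..r, k (r - s) * u s := by
        rw [← intervalIntegral.integral_add_adjacent_intervals hint₀ hint₁, hvanish, zero_add]
    _ ≤ ∫ s in a..r, k (r - s) * S := by
        refine intervalIntegral.integral_mono_on har hint₁ hkS fun s hs => ?_
        exact mul_le_mul_of_nonneg_left (hu_le s hs)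
          (hk_nonneg _ ⟨by linarith [hs.2], by linarith [hs.1]⟩)
    _ = S * ∫ s in 0..(r - a), k s := by
        rw [intervalIntegral.integral_mul_const, intervalIntegral.integral_comp_sub_left k r,
          sub_self, mul_comm]

section VolterraInequality

variable {β : ℝ} {k u : ℝ → ℝ}

theorem eq_zero_of_le_volterra_extend (hk_nonneg : ∀ s ∈ Icc 0 β, 0 ≤ k s)
    (hk : IntegrableOn k (Icc 0 β))
    (hint : ∀ t ∈ Icc 0 β, IntervalIntegrable (fun s => k (t - s) * u s) volume 0 t)
    (hu_nonneg : ∀ t ∈ Icc 0 β, 0 ≤ u t) (hu_bdd : BddAbove (u '' Icc 0 β))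
    (hu : ∀ t ∈ Icc 0 β, u t ≤ ∫ s in 0..t, k (t - s) * u s) {a δ : ℝ} (ha : 0 ≤ a)
    (hkδ : ∀ x ∈ Icc 0 β, x ≤ δ → ∫ s in 0..x, k s < 1 / 2)
    (hzero : ∀ t ∈ Icc 0 β, t ≤ a → u t = 0) :
    ∀ t ∈ Icc 0 β, t ≤ a + δ → u t = 0 := by
  intro t ht hta
  set T := min (a + δ) β
  have hT : Icc 0 T ⊆ Icc 0 β := Icc_subset_Icc_right (min_le_right _ _)
  have htT : t ∈ Icc 0 T := ⟨ht.1, le_min hta ht.2⟩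
  set S := sSup (u '' Icc 0 T)
  have huS : ∀ r ∈ Icc 0 T, u r ≤ S := fun r hr =>
    le_csSup (hu_bdd.mono (image_mono hT)) (mem_image_of_mem u hr)
  have hS : 0 ≤ S := (hu_nonneg t ht).trans (huS t htT)
  have hhalf : ∀ r ∈ Icc 0 T, u r ≤ S / 2 := by
    intro r hr
    have hrβ := hT hr
    rcases le_or_gt r a with hra | har
    · rw [hzero r hrβ hra]
      positivity
    have hra : r - a ∈ Icc 0 β := ⟨by linarith, by linarith [hrβ.2]⟩
    have hrT : r ≤ a + δ := hr.2.trans (min_le_left _ _)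
    calc u r ≤ ∫ s in 0..r, k (r - s) * u s := hu r hrβ
      _ ≤ S * ∫ s in 0..(r - a), k s := by
          refine intervalIntegral_kernel_mul_le ha har.le
            (fun s hs => hk_nonneg s (Icc_subset_Icc_right hra.2 hs))
            ((intervalIntegrable_iff_integrableOn_Icc_of_le hra.1).2
              (hk.mono_set (Icc_subset_Icc_right hra.2)))
            (hint r hrβ) (fun s hs => hzero s ⟨hs.1, hs.2.trans (har.le.trans hrβ.2)⟩ hs.2)
            (fun s hs => huS s ⟨ha.trans hs.1, hs.2.trans hr.2⟩)
      _ ≤ S * (1 / 2) := mul_le_mul_of_nonneg_left (hkδ _ hra (by linarith)).le hS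
      _ = S / 2 := by ring
  have hSS : S ≤ S / 2 := csSup_le ⟨u t, mem_image_of_mem u htT⟩ (by
    rintro _ ⟨r, hr, rfl⟩
    exact hhalf r hr)
  exact le_antisymm (by linarith [huS t htT]) (hu_nonneg t ht)

theorem eq_zero_of_le_volterra (hk_nonneg : ∀ s ∈ Icc 0 β, 0 ≤ k s)
    (hk : IntegrableOn k (Icc 0 β)) (hu_meas : AEStronglyMeasurable u)
    (hu_nonneg : ∀ t ∈ Icc 0 β, 0 ≤ u t) (hu_bdd : BddAbove (u '' Icc 0 β))
    (hu : ∀ t ∈ Icc 0 β, u t ≤ ∫ s in 0..t, k (t - s) * u s) :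
    ∀ t ∈ Icc 0 β, u t = 0 := by
  intro t ht
  have hβ : 0 ≤ β := ht.1.trans ht.2
  obtain ⟨C, hC⟩ := hu_bdd
  have hint : ∀ t ∈ Icc 0 β, IntervalIntegrable (fun s => k (t - s) * u s) volume 0 t :=
    fun t ht => intervalIntegrable_kernel_mul ht.1 (hk.mono_set (Icc_subset_Icc_right ht.2))
      hu_meas fun s hs => by
        have hsβ : s ∈ Icc 0 β := ⟨hs.1, hs.2.trans ht.2⟩
        rw [abs_of_nonneg (hu_nonneg s hsβ)]
        exact hC (mem_image_of_mem u hsβ)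
  obtain ⟨δ, hδ, hkδ⟩ := exists_pos_forall_intervalIntegral_lt hβ hk one_half_pos
  have hvanish : ∀ n : ℕ, ∀ t ∈ Icc 0 β, t ≤ n * δ → u t = 0 := by
    intro n
    induction n with
    | zero =>
      intro t ht ht0
      obtain rfl : t = 0 := le_antisymm (by simpa using ht0) ht.1
      exact le_antisymm (by simpa using hu 0 ht) (hu_nonneg 0 ht)
    | succ n ih =>
      push_cast
      rw [add_one_mul]
      exact eq_zero_of_le_volterra_extend hk_nonneg hk hint hu_nonneg ⟨C, hC⟩ hu
        (by positivity) hkδ ih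
  obtain ⟨n, hn⟩ := exists_nat_ge (β / δ)
  exact hvanish n t ht (ht.2.trans ((div_le_iff₀ hδ).1 hn))

end VolterraInequality

theorem abs_sub_le_volterra {k g y₁ y₂ : ℝ → ℝ} {K : ℝ≥0} {M t : ℝ} (ht : 0 ≤ t)
    (hk_nonneg : ∀ x ∈ Icc 0 t, 0 ≤ k x) (hk : IntegrableOn k (Icc 0 t))
    (hg_cont : Continuous g) (hg : LipschitzOnWith K g (Icc (-M) M))
    (hy₁_meas : Measurable y₁) (hy₂_meas : Measurable y₂)
    (hy₁ : ∀ s ∈ Icc 0 t, |y₁ s| ≤ M) (hy₂ : ∀ s ∈ Icc 0 t, |y₂ s| ≤ M) :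
    |(∫ s in 0..t, k (t - s) * g (y₁ s)) - ∫ s in 0..t, k (t - s) * g (y₂ s)| ≤
      ∫ s in 0..t, K * k (t - s) * |y₁ s - y₂ s| := by
  obtain ⟨C, hC⟩ := isCompact_Icc.exists_bound_of_continuousOn hg_cont.continuousOn
  have hint : ∀ y : ℝ → ℝ, Measurable y → (∀ s ∈ Icc 0 t, |y s| ≤ M) →
      IntervalIntegrable (fun s => k (t - s) * g (y s)) volume 0 t := fun y hy hyM =>
    intervalIntegrable_kernel_mul ht hk (hg_cont.measurable.comp hy).aestronglyMeasurable
      fun s hs => hC _ (abs_le.1 (hyM s hs))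
  have hint₁ := hint y₁ hy₁_meas hy₁
  have hint₂ := hint y₂ hy₂_meas hy₂
  have hint_diff : IntervalIntegrable (fun s => K * k (t - s) * |y₁ s - y₂ s|) volume 0 t := by
    refine intervalIntegrable_kernel_mul (C := M + M) ht (hk.const_mul K)
      (hy₁_meas.sub hy₂_meas).abs.aestronglyMeasurable fun s hs => ?_
    rw [abs_abs]
    exact (abs_sub _ _).trans (add_le_add (hy₁ s hs) (hy₂ s hs))
  rw [← intervalIntegral.integral_sub hint₁ hint₂]
  refine (intervalIntegral.abs_integral_le_integral_abs ht).trans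
    (intervalIntegral.integral_mono_on ht (hint₁.sub hint₂).abs hint_diff fun s hs => ?_)
  have hks : 0 ≤ k (t - s) := hk_nonneg _ ⟨sub_nonneg.2 hs.2, by linarith [hs.1]⟩
  rw [← mul_sub, abs_mul, abs_of_nonneg hks, mul_comm (K : ℝ), mul_assoc]
  exact mul_le_mul_of_nonneg_left
    (hg.dist_le_mul _ (abs_le.1 (hy₁ s hs)) _ (abs_le.1 (hy₂ s hs))) hks

theorem stmt_6_general
    (β : ℝ) (hβ : 0 < β)
    (k : ℝ → ℝ) (hk_nonneg : ∀ s, 0 ≤ s → 0 ≤ k s)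
    (hk_loc : ∀ b, 0 < b → IntegrableOn k (Icc 0 b))
    (f : ℝ → ℝ)
    (g : ℝ → ℝ) (hg_lip : LocallyLipschitz g)
    (y₁ y₂ : ℝ → ℝ)
    (hy₁_meas : Measurable y₁) (hy₁_bdd : ∃ C, ∀ t ∈ Icc (0:ℝ) β, |y₁ t| ≤ C)
    (hy₂_meas : Measurable y₂) (hy₂_bdd : ∃ C, ∀ t ∈ Icc (0:ℝ) β, |y₂ t| ≤ C)
    (hy₁ : ∀ t ∈ Icc (0:ℝ) β, y₁ t = f t + ∫ s in (0:ℝ)..t, k (t - s) * g (y₁ s))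
    (hy₂ : ∀ t ∈ Icc (0:ℝ) β, y₂ t = f t + ∫ s in (0:ℝ)..t, k (t - s) * g (y₂ s)) :
    ∀ t ∈ Icc (0:ℝ) β, y₁ t = y₂ t := by
  obtain ⟨M, hy₁M, hy₂M⟩ : ∃ M, (∀ t ∈ Icc (0:ℝ) β, |y₁ t| ≤ M) ∧
      ∀ t ∈ Icc (0:ℝ) β, |y₂ t| ≤ M := by
    obtain ⟨C₁, hC₁⟩ := hy₁_bdd
    obtain ⟨C₂, hC₂⟩ := hy₂_bdd
    exact ⟨max C₁ C₂, fun t ht => (hC₁ t ht).trans (le_max_left _ _),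
      fun t ht => (hC₂ t ht).trans (le_max_right _ _)⟩
  obtain ⟨K, hK⟩ := hg_lip.locallyLipschitzOn.exists_lipschitzOnWith_of_compact
    (isCompact_Icc (a := -M) (b := M))
  have hk : IntegrableOn k (Icc 0 β) := hk_loc β hβ
  have hu : ∀ t ∈ Icc (0:ℝ) β,
      |y₁ t - y₂ t| ≤ ∫ s in 0..t, K * k (t - s) * |y₁ s - y₂ s| := by
    intro t ht
    have hsub : Icc 0 t ⊆ Icc 0 β := Icc_subset_Icc_right ht.2
    rw [hy₁ t ht, hy₂ t ht, add_sub_add_left_eq_sub]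
    exact abs_sub_le_volterra ht.1 (fun x hx => hk_nonneg x hx.1) (hk.mono_set hsub)
      hg_lip.continuous hK hy₁_meas hy₂_meas (fun s hs => hy₁M s (hsub hs))
      (fun s hs => hy₂M s (hsub hs))
  have hu_bdd : BddAbove ((fun t => |y₁ t - y₂ t|) '' Icc 0 β) := by
    refine ⟨M + M, ?_⟩
    rintro _ ⟨t, ht, rfl⟩
    exact (abs_sub _ _).trans (add_le_add (hy₁M t ht) (hy₂M t ht))
  have hu_zero := eq_zero_of_le_volterra (k := fun s => K * k s)
    (fun s hs => mul_nonneg K.coe_nonneg (hk_nonneg s hs.1)) (hk.const_mul K)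
    (hy₁_meas.sub hy₂_meas).abs.aestronglyMeasurable (fun t _ => abs_nonneg _) hu_bdd hu
  exact fun t ht => sub_eq_zero.1 (abs_eq_zero.1 (hu_zero t ht))

/-- Uniqueness of bounded measurable solutions of the nonlinear Volterra equation
`y(t) = f(t) + ∫₀ᵗ k(t−s) g(y(s)) ds` on `[0, β]`, for a locally integrable
nonnegative kernel `k`, bounded measurable forcing `f` and locally Lipschitz `g`. -/
theorem stmt_6
    (β : ℝ) (hβ : 0 < β)
    (k : ℝ → ℝ) (hk_nonneg : ∀ s, 0 ≤ s → 0 ≤ k s)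
    (hk_loc : ∀ b, 0 < b → IntegrableOn k (Icc 0 b))
    (f : ℝ → ℝ) (hf_meas : Measurable f)
    (hf_bdd : ∃ C, ∀ t ∈ Icc (0:ℝ) β, |f t| ≤ C)
    (g : ℝ → ℝ) (hg_lip : LocallyLipschitz g)
    (y₁ y₂ : ℝ → ℝ)
    (hy₁_meas : Measurable y₁) (hy₁_bdd : ∃ C, ∀ t ∈ Icc (0:ℝ) β, |y₁ t| ≤ C)
    (hy₂_meas : Measurable y₂) (hy₂_bdd : ∃ C, ∀ t ∈ Icc (0:ℝ) β, |y₂ t| ≤ C)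
    (hy₁ : ∀ t ∈ Icc (0:ℝ) β, y₁ t = f t + ∫ s in (0:ℝ)..t, k (t - s) * g (y₁ s))
    (hy₂ : ∀ t ∈ Icc (0:ℝ) β, y₂ t = f t + ∫ s in (0:ℝ)..t, k (t - s) * g (y₂ s)) :
    ∀ t ∈ Icc (0:ℝ) β, y₁ t = y₂ t :=
  stmt_6_general β hβ k hk_nonneg hk_loc f g hg_lip y₁ y₂ hy₁_meas hy₁_bdd hy₂_meas hy₂_bdd hy₁ hy₂
end

section
/- Let β > 0. Let k : [0,∞) → [0,∞) be locally integrable and satisfy: for every t₀ > 0, ∫₀^∞ |k(t₀ − s) − k(t − s)| ds → 0 as t → t₀ (with k extended by 0 on negative arguments). Let g : ℝ → ℝ be positive, bounded and locally Lipschitz continuous. Let f : [0,β] → ℝ be bounded and measurable, and let (fₙ) be a sequence of continuous bounded functions on [0,β] that is pointwise nonincreasing in n and converges pointwise to f. If xₙ is a continuous solution of xₙ(t) = fₙ(t) + ∫₀ᵗ k(t−s) g(xₙ(s)) ds on [0,β] for each n, and x is a bounded measurable solution of x(t) = f(t) + ∫₀ᵗ k(t−s) g(x(s)) ds on [0,β],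 then xₙ(t) → x(t) as n → ∞ for every t ∈ [0,β]. -/
open MeasureTheory Set Filter Topology
open scoped ENNReal NNReal

/-!
Write `D n = |xₙ - x|`. Since `fₙ ↓ f`, all `xₙ` and `x` take values in one compact interval,
on which `g` is `L`-Lipschitz, so `D n t ≤ (fₙ t - f t) + L ∫₀ᵗ k(t-s) D n s ds`. Reverse
Fatou turns this into `V t ≤ L ∫₀ᵗ k(t-s) V s ds` for the bounded function `V = limsup D n`,
and a Gronwall argument in the weighted sup norm `sup_t e^{-ct} V t` (with `c` so large that
`L ∫₀^β k(u) e^{-cu} du < 1`) forces `V = 0`.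
-/

lemma setLIntegral_Ioc_comp_sub_left (κ : ℝ → ℝ≥0∞) (a t : ℝ) :
    ∫⁻ s in Ioc a t, κ (t - s) = ∫⁻ u in Ioc 0 (t - a), κ u := by
  have hpre : (fun s => t - s) ⁻¹' Ico 0 (t - a) = Ioc a t := by
    ext s
    simp only [mem_preimage, mem_Ico, mem_Ioc]
    constructor <;> rintro ⟨h₁, h₂⟩ <;> constructor <;> linarith
  rw [← setLIntegral_congr (Ico_ae_eq_Ioc (a := (0:ℝ))), ← hpre]
  exact (Measure.measurePreserving_sub_left volume t).setLIntegral_comp_preimage_emb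
    (MeasurableEquiv.subLeft t).measurableEmbedding _ _

lemma limsup_lintegral_le' {α : Type*} [MeasurableSpace α] {μ : Measure α}
    {f : ℕ → α → ℝ≥0∞} (g : α → ℝ≥0∞) (hf : ∀ n, AEMeasurable (f n) μ)
    (h_bound : ∀ n, f n ≤ᵐ[μ] g) (h_fin : ∫⁻ a, g a ∂μ ≠ ∞) :
    limsup (fun n => ∫⁻ a, f n a ∂μ) atTop ≤ ∫⁻ a, limsup (fun n => f n a) atTop ∂μ := by
  have hmk : ∀ᵐ a ∂μ, ∀ n, f n a = (hf n).mk _ a := ae_all_iff.2 fun n => (hf n).ae_eq_mk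
  calc limsup (fun n => ∫⁻ a, f n a ∂μ) atTop
      = limsup (fun n => ∫⁻ a, (hf n).mk _ a ∂μ) atTop := by
        simp_rw [lintegral_congr_ae (hf _).ae_eq_mk]
    _ ≤ ∫⁻ a, limsup (fun n => (hf n).mk _ a) atTop ∂μ :=
        limsup_lintegral_le g (fun n => (hf n).measurable_mk)
          (fun n => (hf n).ae_eq_mk.symm.le.trans (h_bound n)) h_fin
    _ = ∫⁻ a, limsup (fun n => f n a) atTop ∂μ :=
        lintegral_congr_ae (hmk.mono fun a ha => by simp_rw [ha])

lemma tendsto_setLIntegral_mul_exp_neg {κ : ℝ → ℝ≥0∞} {β : ℝ}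
    (hκ : AEMeasurable κ (volume.restrict (Ioc 0 β))) (hκβ : ∫⁻ u in Ioc 0 β, κ u ≠ ∞) :
    Tendsto (fun n : ℕ => ∫⁻ u in Ioc 0 β, κ u * ENNReal.ofReal (Real.exp (-(n * u))))
      atTop (𝓝 0) := by
  rw [← lintegral_zero]
  refine tendsto_lintegral_of_dominated_convergence' κ
    (fun n => hκ.mul (by fun_prop)) (fun n => ?_) hκβ ?_
  · filter_upwards [ae_restrict_mem measurableSet_Ioc] with u hu
    refine mul_le_of_le_one_right' ?_
    simp only [ENNReal.ofReal_le_one, Real.exp_le_one_iff, neg_nonpos]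
    exact mul_nonneg n.cast_nonneg hu.1.le
  filter_upwards [ae_lt_top' hκ hκβ, ae_restrict_mem measurableSet_Ioc] with u hu_top hu
  have hexp : Tendsto (fun n : ℕ => ENNReal.ofReal (Real.exp (-(n * u)))) atTop (𝓝 0) := by
    rw [← ENNReal.ofReal_zero]
    refine ENNReal.tendsto_ofReal (Real.tendsto_exp_neg_atTop_nhds_zero.comp ?_)
    exact tendsto_natCast_atTop_atTop.atTop_mul_const hu.1
  simpa using ENNReal.Tendsto.const_mul hexp (Or.inr hu_top.ne)

lemma eq_zero_of_le_lintegral_kernel_mul {κ V : ℝ → ℝ≥0∞} {β : ℝ} {S : ℝ≥0∞}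
    (hκ : AEMeasurable κ (volume.restrict (Ioc 0 β))) (hκβ : ∫⁻ u in Ioc 0 β, κ u ≠ ∞)
    (hS : S ≠ ∞) (hVS : ∀ t ∈ Icc 0 β, V t ≤ S)
    (hV : ∀ t ∈ Icc 0 β, V t ≤ ∫⁻ s in Ioc 0 t, κ (t - s) * V s) :
    ∀ t ∈ Icc 0 β, V t = 0 := by
  obtain ⟨c, hc⟩ := ((tendsto_setLIntegral_mul_exp_neg hκ hκβ).eventually_lt_const
    zero_lt_one).exists
  set w : ℝ → ℝ≥0∞ := fun u => ENNReal.ofReal (Real.exp (-(c * u)))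
  set q := ∫⁻ u in Ioc 0 β, κ u * w u
  have hw_pos : ∀ u, w u ≠ 0 := fun u => by simp [w, Real.exp_pos]
  have hw_le : ∀ u, 0 ≤ u → w u ≤ 1 := fun u hu => by
    simp only [w, ENNReal.ofReal_le_one, Real.exp_le_one_iff, neg_nonpos]; positivity
  have hw_mul : ∀ s t, w t = w (t - s) * w s := fun s t => by
    simp only [w, ← ENNReal.ofReal_mul (Real.exp_pos _).le, ← Real.exp_add]; ring_nf
  set W := ⨆ t ∈ Icc 0 β, w t * V t
  have hW : W ≠ ∞ := ne_top_of_le_ne_top hS <| iSup₂_le fun t ht =>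
    (mul_le_of_le_one_left' (hw_le t ht.1)).trans (hVS t ht)
  have hWq : W ≤ q * W := iSup₂_le fun t ht => calc
    w t * V t ≤ w t * ∫⁻ s in Ioc 0 t, κ (t - s) * V s := by gcongr; exact hV t ht
    _ = ∫⁻ s in Ioc 0 t, κ (t - s) * w (t - s) * (w s * V s) := by
        rw [← lintegral_const_mul' _ _ (by simp [w])]
        congr 1; ext s; rw [hw_mul s t]; ring
    _ ≤ ∫⁻ s in Ioc 0 t, κ (t - s) * w (t - s) * W := by
        refine setLIntegral_mono' measurableSet_Ioc fun s hs => ?_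
        gcongr
        exact le_iSup₂ (f := fun t _ => w t * V t) s ⟨hs.1.le, hs.2.trans ht.2⟩
    _ = (∫⁻ u in Ioc 0 t, κ u * w u) * W := by
        rw [lintegral_mul_const' _ _ hW, setLIntegral_Ioc_comp_sub_left (fun u => κ u * w u),
          sub_zero]
    _ ≤ q * W := by gcongr; exact lintegral_mono_set (Ioc_subset_Ioc_right ht.2)
  have hW0 : W = 0 := by
    by_contra hW0
    exact (hWq.trans_lt (by simpa using ENNReal.mul_lt_mul_left hW0 hW hc)).false
  intro t ht
  have hwV : w t * V t ≤ W := le_iSup₂ (f := fun t _ => w t * V t) t ht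
  rw [hW0, nonpos_iff_eq_zero, mul_eq_zero] at hwV
  exact hwV.resolve_left (hw_pos t)

lemma tendsto_zero_of_le_add_lintegral_kernel_mul {κ : ℝ → ℝ≥0∞} {D ε : ℕ → ℝ → ℝ≥0∞}
    {β : ℝ} {S : ℝ≥0∞} (hκ : AEMeasurable κ) (hκβ : ∫⁻ u in Ioc 0 β, κ u ≠ ∞)
    (hD : ∀ n, AEMeasurable (D n) (volume.restrict (Icc 0 β)))
    (hS : S ≠ ∞) (hDS : ∀ n, ∀ t ∈ Icc 0 β, D n t ≤ S)
    (hε : ∀ t ∈ Icc 0 β, Tendsto (fun n => ε n t) atTop (𝓝 0))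
    (hDε : ∀ n, ∀ t ∈ Icc 0 β, D n t ≤ ε n t + ∫⁻ s in Ioc 0 t, κ (t - s) * D n s) :
    ∀ t ∈ Icc 0 β, Tendsto (fun n => D n t) atTop (𝓝 0) := by
  set V : ℝ → ℝ≥0∞ := fun t => limsup (fun n => D n t) atTop
  have hVS : ∀ t ∈ Icc 0 β, V t ≤ S := fun t ht =>
    limsup_le_of_le (by isBoundedDefault) (Eventually.of_forall fun n => hDS n t ht)
  have hV : ∀ t ∈ Icc 0 β, V t ≤ ∫⁻ s in Ioc 0 t, κ (t - s) * V s := by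
    intro t ht
    have hIoc : Ioc 0 t ⊆ Icc 0 β := Ioc_subset_Icc_self.trans (Icc_subset_Icc_right ht.2)
    have hκt : AEMeasurable (fun s => κ (t - s)) (volume.restrict (Ioc 0 t)) :=
      (hκ.comp_quasiMeasurePreserving
        (Measure.measurePreserving_sub_left volume t).quasiMeasurePreserving).restrict
    have hκt_fin : ∫⁻ s in Ioc 0 t, κ (t - s) ≠ ∞ := by
      rw [setLIntegral_Ioc_comp_sub_left, sub_zero]
      exact ne_top_of_le_ne_top hκβ (lintegral_mono_set (Ioc_subset_Ioc_right ht.2))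
    calc V t ≤ limsup (fun n => ε n t + ∫⁻ s in Ioc 0 t, κ (t - s) * D n s) atTop :=
          limsup_le_limsup (Eventually.of_forall fun n => hDε n t ht)
      _ = limsup (fun n => ∫⁻ s in Ioc 0 t, κ (t - s) * D n s) atTop :=
          ENNReal.limsup_add_of_left_tendsto_zero (hε t ht) _
      _ ≤ ∫⁻ s in Ioc 0 t, limsup (fun n => κ (t - s) * D n s) atTop := by
          refine limsup_lintegral_le' (fun s => κ (t - s) * S)
            (fun n => hκt.mul ((hD n).mono_set hIoc)) (fun n => ?_) ?_
          · filter_upwards [ae_restrict_mem measurableSet_Ioc] with s hs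
            gcongr; exact hDS n s (hIoc hs)
          · rw [lintegral_mul_const' _ _ hS]; exact ENNReal.mul_ne_top hκt_fin hS
      _ = ∫⁻ s in Ioc 0 t, κ (t - s) * V s := by
          refine lintegral_congr_ae ?_
          filter_upwards [ae_lt_top' hκt hκt_fin] with s hs
          exact ENNReal.limsup_const_mul_of_ne_top hs.ne
  intro t ht
  exact tendsto_of_le_liminf_of_limsup_le zero_le
    (eq_zero_of_le_lintegral_kernel_mul hκ.restrict hκβ hS hVS hV t ht).le

lemma aemeasurable_of_integrableOn_Icc_of_eq_zero {k : ℝ → ℝ}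
    (hk_zero : ∀ s, s < 0 → k s = 0) (hk_loc : ∀ b, 0 < b → IntegrableOn k (Icc 0 b)) :
    AEMeasurable k := by
  have hk : k = (Ici 0).indicator k := by
    ext s
    by_cases hs : 0 ≤ s
    · rw [indicator_of_mem (show s ∈ Ici 0 from hs)]
    · rw [indicator_of_notMem (show s ∉ Ici 0 from hs), hk_zero s (not_le.1 hs)]
  have hIci : Ici (0 : ℝ) = ⋃ n : ℕ, Icc 0 ((n : ℝ) + 1) := by
    refine (iUnion_subset fun n => Icc_subset_Ici_self).antisymm' fun s hs => ?_
    obtain ⟨n, hn⟩ := exists_nat_ge s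
    exact mem_iUnion.2 ⟨n, hs, by linarith⟩
  rw [hk, aemeasurable_indicator_iff measurableSet_Ici, hIci, aemeasurable_iUnion_iff]
  exact fun n => (hk_loc _ n.cast_add_one_pos).aemeasurable

lemma intervalIntegrable_comp_sub_left_of_integrableOn {k : ℝ → ℝ} {β t : ℝ}
    (hk : IntegrableOn k (Icc 0 β)) (ht : t ∈ Icc 0 β) :
    IntervalIntegrable (fun s => k (t - s)) volume 0 t := by
  have hkt : IntervalIntegrable k volume 0 t :=
    (intervalIntegrable_iff_integrableOn_Icc_of_le ht.1).2 (hk.mono_set (Icc_subset_Icc_right ht.2))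
  simpa using (hkt.comp_sub_left t).symm

lemma intervalIntegrable_comp_sub_left_mul {k φ : ℝ → ℝ} {β t C : ℝ}
    (hk : IntegrableOn k (Icc 0 β)) (ht : t ∈ Icc 0 β)
    (hφ : AEStronglyMeasurable φ (volume.restrict (Icc 0 β))) (hφC : ∀ s, ‖φ s‖ ≤ C) :
    IntervalIntegrable (fun s => k (t - s) * φ s) volume 0 t := by
  have hkt := intervalIntegrable_comp_sub_left_of_integrableOn hk ht
  rw [intervalIntegrable_iff_integrableOn_Ioc_of_le ht.1] at hkt ⊢
  exact hkt.mul_bdd (hφ.mono_set (Ioc_subset_Icc_self.trans (Icc_subset_Icc_right ht.2)))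
    (ae_of_all _ hφC)

lemma abs_integral_comp_sub_left_mul_le {k φ : ℝ → ℝ} {β t C : ℝ}
    (hk_nonneg : ∀ s, 0 ≤ s → 0 ≤ k s) (hk : IntegrableOn k (Icc 0 β)) (ht : t ∈ Icc 0 β)
    (hφC : ∀ s, |φ s| ≤ C) :
    |∫ s in (0:ℝ)..t, k (t - s) * φ s| ≤ C * ∫ u in (0:ℝ)..β, k u := by
  have hkt := intervalIntegrable_comp_sub_left_of_integrableOn hk ht
  calc |∫ s in (0:ℝ)..t, k (t - s) * φ s| ≤ ∫ s in (0:ℝ)..t, C * k (t - s) := by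
        rw [← Real.norm_eq_abs]
        refine intervalIntegral.norm_integral_le_of_norm_le ht.1
          (ae_of_all _ fun s hs => ?_)
          (hkt.const_mul C)
        rw [Real.norm_eq_abs, abs_mul, abs_of_nonneg (hk_nonneg _ (sub_nonneg.2 hs.2)), mul_comm]
        gcongr
        · exact hk_nonneg _ (sub_nonneg.2 hs.2)
        · exact hφC s
    _ = C * ∫ u in (0:ℝ)..t, k u := by
        rw [intervalIntegral.integral_const_mul, intervalIntegral.integral_comp_sub_left,
          sub_self, sub_zero]
    _ ≤ C * ∫ u in (0:ℝ)..β, k u :=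
        mul_le_mul_of_nonneg_left (intervalIntegral.integral_mono_interval le_rfl ht.1 ht.2
          ((ae_restrict_iff' measurableSet_Ioc).2 (ae_of_all _ fun u hu => hk_nonneg u hu.1.le))
          ((intervalIntegrable_iff_integrableOn_Icc_of_le (ht.1.trans ht.2)).2 hk))
          ((abs_nonneg _).trans (hφC 0))

lemma edist_le_add_lintegral_of_volterra_eq {k g y z : ℝ → ℝ} {a b t : ℝ} {L : ℝ≥0}
    {A : Set ℝ} (ht : 0 ≤ t) (hg : LipschitzOnWith L g A)
    (hyA : ∀ s ∈ Ioc 0 t, y s ∈ A) (hzA : ∀ s ∈ Ioc 0 t, z s ∈ A)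
    (hyi : IntervalIntegrable (fun s => k (t - s) * g (y s)) volume 0 t)
    (hzi : IntervalIntegrable (fun s => k (t - s) * g (z s)) volume 0 t)
    (hy : y t = a + ∫ s in (0:ℝ)..t, k (t - s) * g (y s))
    (hz : z t = b + ∫ s in (0:ℝ)..t, k (t - s) * g (z s)) :
    edist (y t) (z t) ≤ edist a b + ∫⁻ s in Ioc 0 t, ‖k (t - s)‖ₑ * L * edist (y s) (z s) := by
  have hsplit : y t - z t = (a - b) + ∫ s in Ioc 0 t, k (t - s) * (g (y s) - g (z s)) := by
    simp_rw [mul_sub]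
    rw [hy, hz, ← intervalIntegral.integral_of_le ht, intervalIntegral.integral_sub hyi hzi]
    ring
  rw [edist_eq_enorm_sub, edist_eq_enorm_sub, hsplit]
  refine (enorm_add_le _ _).trans (add_le_add le_rfl ?_)
  refine (enorm_integral_le_lintegral_enorm _).trans
    (setLIntegral_mono' measurableSet_Ioc fun s hs => ?_)
  rw [enorm_mul, mul_assoc, ← edist_eq_enorm_sub]
  gcongr
  exact hg (hyA s hs) (hzA s hs)

lemma abs_le_max_of_antitone_of_tendsto {u : ℕ → ℝ} {a : ℝ} (hu : Antitone u)
    (hlim : Tendsto u atTop (𝓝 a)) (n : ℕ) : |u n| ≤ max |a| |u 0| :=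
  abs_le_max_abs_abs (hu.le_of_tendsto hlim n) (hu (Nat.zero_le n))

lemma abs_le_of_volterra_eq {k g y : ℝ → ℝ} {a β t C : ℝ}
    (hk_nonneg : ∀ s, 0 ≤ s → 0 ≤ k s) (hk : IntegrableOn k (Icc 0 β)) (ht : t ∈ Icc 0 β)
    (hgC : ∀ v, |g v| ≤ C) (hy : y t = a + ∫ s in (0:ℝ)..t, k (t - s) * g (y s)) :
    |y t| ≤ |a| + C * ∫ u in (0:ℝ)..β, k u := by
  rw [hy]
  exact (abs_add_le _ _).trans
    (add_le_add le_rfl (abs_integral_comp_sub_left_mul_le hk_nonneg hk ht fun s => hgC _))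

theorem stmt_7_general
    (β : ℝ) (hβ : 0 < β)
    (k : ℝ → ℝ) (hk_nonneg : ∀ s, 0 ≤ s → 0 ≤ k s)
    (hk_zero : ∀ s, s < 0 → k s = 0)
    (hk_loc : ∀ b, 0 < b → IntegrableOn k (Icc 0 b))
    (g : ℝ → ℝ) (hg_pos : ∀ x, 0 < g x) (hg_bdd : ∃ C, ∀ x, g x ≤ C)
    (hg_lip : LocallyLipschitz g)
    (f : ℝ → ℝ)
    (hf_bdd : ∃ C, ∀ t ∈ Icc (0:ℝ) β, |f t| ≤ C)
    (F : ℕ → ℝ → ℝ)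
    (hF_bdd : ∀ n, ∃ C, ∀ t ∈ Icc (0:ℝ) β, |F n t| ≤ C)
    (hF_anti : ∀ n, ∀ t ∈ Icc (0:ℝ) β, F (n + 1) t ≤ F n t)
    (hF_lim : ∀ t ∈ Icc (0:ℝ) β, Tendsto (fun n => F n t) atTop (𝓝 (f t)))
    (X : ℕ → ℝ → ℝ)
    (hX_cont : ∀ n, ContinuousOn (X n) (Icc 0 β))
    (hX_eq : ∀ n, ∀ t ∈ Icc (0:ℝ) β,
      X n t = F n t + ∫ s in (0:ℝ)..t, k (t - s) * g (X n s))
    (x : ℝ → ℝ) (hx_meas : Measurable x)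
    (hx_bdd : ∃ C, ∀ t ∈ Icc (0:ℝ) β, |x t| ≤ C)
    (hx_eq : ∀ t ∈ Icc (0:ℝ) β, x t = f t + ∫ s in (0:ℝ)..t, k (t - s) * g (x s)) :
    ∀ t ∈ Icc (0:ℝ) β, Tendsto (fun n => X n t) atTop (𝓝 (x t)) := by
  obtain ⟨Cg, hCg⟩ := hg_bdd
  have hg_abs : ∀ v, |g v| ≤ Cg := fun v => abs_le.2 ⟨by linarith [hg_pos v, hCg v], hCg v⟩
  have hk := hk_loc β hβ
  obtain ⟨M, hXM, hxM⟩ : ∃ M, (∀ n, ∀ t ∈ Icc 0 β, X n t ∈ Icc (-M) M) ∧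
      ∀ t ∈ Icc 0 β, x t ∈ Icc (-M) M := by
    obtain ⟨C₀, hC₀⟩ := hF_bdd 0
    obtain ⟨Cf, hCf⟩ := hf_bdd
    obtain ⟨Cx, hCx⟩ := hx_bdd
    refine ⟨max (max Cf C₀ + Cg * ∫ u in (0:ℝ)..β, k u) Cx, fun n t ht => abs_le.1 ?_,
      fun t ht => abs_le.1 ((hCx t ht).trans (le_max_right _ _))⟩
    have hF : |F n t| ≤ max Cf C₀ := (abs_le_max_of_antitone_of_tendsto
      (antitone_nat_of_succ_le fun n => hF_anti n t ht) (hF_lim t ht) n).trans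
      (max_le_max (hCf t ht) (hC₀ t ht))
    exact ((abs_le_of_volterra_eq hk_nonneg hk ht hg_abs (hX_eq n t ht)).trans
      (add_le_add hF le_rfl)).trans (le_max_left _ _)
  obtain ⟨L, hL⟩ := hg_lip.locallyLipschitzOn.exists_lipschitzOnWith_of_compact
    (isCompact_Icc (a := -M) (b := M))
  have hκ_fin : ∫⁻ u in Ioc 0 β, ‖k u‖ₑ * L ≠ ∞ := by
    rw [lintegral_mul_const' _ _ ENNReal.coe_ne_top]
    exact ENNReal.mul_ne_top (hk.mono_set Ioc_subset_Icc_self).2.ne ENNReal.coe_ne_top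
  have hdist_le : ∀ n, ∀ t ∈ Icc 0 β, edist (X n t) (x t) ≤ ENNReal.ofReal (M - -M) :=
    fun n t ht => by
      rw [edist_dist]
      exact ENNReal.ofReal_le_ofReal (Real.dist_le_of_mem_Icc (hXM n t ht) (hxM t ht))
  have hdist_volterra : ∀ n, ∀ t ∈ Icc 0 β, edist (X n t) (x t) ≤ edist (F n t) (f t) +
      ∫⁻ s in Ioc 0 t, ‖k (t - s)‖ₑ * L * edist (X n s) (x s) := by
    intro n t ht
    have hIoc : Ioc 0 t ⊆ Icc 0 β := Ioc_subset_Icc_self.trans (Icc_subset_Icc_right ht.2)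
    exact edist_le_add_lintegral_of_volterra_eq ht.1 hL
      (fun s hs => hXM n s (hIoc hs)) (fun s hs => hxM s (hIoc hs))
      (intervalIntegrable_comp_sub_left_mul hk ht
        ((hg_lip.continuous.comp_continuousOn (hX_cont n)).aestronglyMeasurable measurableSet_Icc)
        fun s => hg_abs _)
      (intervalIntegrable_comp_sub_left_mul hk ht
        (hg_lip.continuous.measurable.comp hx_meas).aestronglyMeasurable fun s => hg_abs _)
      (hX_eq n t ht) (hx_eq t ht)
  refine fun t ht => tendsto_iff_edist_tendsto_0.2 <| tendsto_zero_of_le_add_lintegral_kernel_mul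
    ((aemeasurable_of_integrableOn_Icc_of_eq_zero hk_zero hk_loc).enorm.mul_const _) hκ_fin
    (fun n => ((hX_cont n).aemeasurable measurableSet_Icc).edist hx_meas.aemeasurable)
    ENNReal.ofReal_ne_top hdist_le (fun t ht => tendsto_iff_edist_tendsto_0.1 (hF_lim t ht))
    hdist_volterra t ht

/-- Stability of the nonlinear Volterra equation under monotone pointwise
approximation of the forcing term: if continuous forcings `fₙ` decrease
pointwise to a bounded measurable forcing `f`, then the corresponding continuous
solutions `xₙ` converge pointwise to the bounded measurable solution `x`. -/
theorem stmt_7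
    (β : ℝ) (hβ : 0 < β)
    (k : ℝ → ℝ) (hk_nonneg : ∀ s, 0 ≤ s → 0 ≤ k s)
    (hk_zero : ∀ s, s < 0 → k s = 0)
    (hk_loc : ∀ b, 0 < b → IntegrableOn k (Icc 0 b))
    (hk_cont : ∀ t₀, 0 < t₀ →
      Tendsto (fun t => ∫ s in Ioi (0:ℝ), |k (t₀ - s) - k (t - s)|) (𝓝 t₀) (𝓝 0))
    (g : ℝ → ℝ) (hg_pos : ∀ x, 0 < g x) (hg_bdd : ∃ C, ∀ x, g x ≤ C)
    (hg_lip : LocallyLipschitz g)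
    (f : ℝ → ℝ) (hf_meas : Measurable f)
    (hf_bdd : ∃ C, ∀ t ∈ Icc (0:ℝ) β, |f t| ≤ C)
    (F : ℕ → ℝ → ℝ)
    (hF_cont : ∀ n, ContinuousOn (F n) (Icc 0 β))
    (hF_bdd : ∀ n, ∃ C, ∀ t ∈ Icc (0:ℝ) β, |F n t| ≤ C)
    (hF_anti : ∀ n, ∀ t ∈ Icc (0:ℝ) β, F (n + 1) t ≤ F n t)
    (hF_lim : ∀ t ∈ Icc (0:ℝ) β, Tendsto (fun n => F n t) atTop (𝓝 (f t)))
    (X : ℕ → ℝ → ℝ)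
    (hX_cont : ∀ n, ContinuousOn (X n) (Icc 0 β))
    (hX_eq : ∀ n, ∀ t ∈ Icc (0:ℝ) β,
      X n t = F n t + ∫ s in (0:ℝ)..t, k (t - s) * g (X n s))
    (x : ℝ → ℝ) (hx_meas : Measurable x)
    (hx_bdd : ∃ C, ∀ t ∈ Icc (0:ℝ) β, |x t| ≤ C)
    (hx_eq : ∀ t ∈ Icc (0:ℝ) β, x t = f t + ∫ s in (0:ℝ)..t, k (t - s) * g (x s)) :
    ∀ t ∈ Icc (0:ℝ) β, Tendsto (fun n => X n t) atTop (𝓝 (x t)) :=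
  stmt_7_general β hβ k hk_nonneg hk_zero hk_loc g hg_pos hg_bdd hg_lip f hf_bdd F hF_bdd hF_anti
    hF_lim X hX_cont hX_eq x hx_meas hx_bdd hx_eq
end
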